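/- Let M be a prime Γ-ring and f: M → M an additive map that is centralizing on a left ideal J of M (i.e., [f(a),a]_α ∈ Z(M) for all a ∈ J, α ∈ Γ). Then f(a) ∈ Z(M) for every a ∈ J ∩ Z(M). -/
import Mathlib


structure GammaRing (M : Type*) (Γ : Type*) [AddCommGroup M] [AddCommGroup Γ] where
  tp : M → Γ → M → M
  add_left : ∀ (x y : M) (α : Γ) (z : M), tp (x + y) α z = tp x α z + tp y α z
  add_mid : ∀ (x : M) (α β : Γ) (z : M), tp x (α + β) z = tp x α z + tp x β z
  add_right : ∀ (x : M) (α : Γ) (y z : M), tp x α (y + z) = tp x α y + tp x α z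
  assoc : ∀ (x : M) (α : Γ) (y : M) (β : Γ) (z : M),
    tp (tp x α y) β z = tp x α (tp y β z)

namespace GammaRing

variable {M Γ : Type*} [AddCommGroup M] [AddCommGroup Γ] (G : GammaRing M Γ)

/-- The commutator `[x,y]_α = xαy - yαx`. -/
def comm (x : M) (α : Γ) (y : M) : M := G.tp x α y - G.tp y α x

/-- The centre `Z(M)`. -/
def center : Set M := {z | ∀ (α : Γ) (y : M), G.tp z α y = G.tp y α z}

/-- `M` is a prime Γ-ring. -/
def IsPrime : Prop :=
  ∀ a b : M, (∀ (x : M) (α β : Γ), G.tp (G.tp a α x) β b = 0) → a = 0 ∨ b = 0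

/-- Assumption (A): `xαyβz = xβyαz`. -/
def AssumptionA : Prop :=
  ∀ (x y z : M) (α β : Γ), G.tp (G.tp x α y) β z = G.tp (G.tp x β y) α z

/-- `D` is a derivation on `M`. -/
def IsDerivation (D : M → M) : Prop :=
  (∀ x y : M, D (x + y) = D x + D y) ∧
    ∀ (x : M) (α : Γ) (y : M), D (G.tp x α y) = G.tp (D x) α y + G.tp x α (D y)

/-- `f` is a generalized derivation with associated derivation `D`. -/
def IsGenDerivation (f D : M → M) : Prop :=
  (∀ x y : M, f (x + y) = f x + f y) ∧
    ∀ (x : M) (α : Γ) (y : M), f (G.tp x α y) = G.tp (f x) α y + G.tp x α (D y)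

/-- `J` is a left ideal. -/
def IsLeftIdeal (J : AddSubgroup M) : Prop :=
  ∀ (m : M) (α : Γ) (j : M), j ∈ J → G.tp m α j ∈ J

/-- `f` is commuting on `J`. -/
def CommutingOn (f : M → M) (J : AddSubgroup M) : Prop :=
  ∀ a ∈ J, ∀ α : Γ, G.comm (f a) α a = 0

/-- `f` is centralizing on `J`. -/
def CentralizingOn (f : M → M) (J : AddSubgroup M) : Prop :=
  ∀ a ∈ J, ∀ α : Γ, G.comm (f a) α a ∈ G.center

/-- `M` is a commutative Γ-ring. -/
def IsCommutative : Prop := ∀ (x : M) (α : Γ) (y : M), G.tp x α y = G.tp y α x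


lemma tp_zero_left (α : Γ) (z : M) : G.tp 0 α z = 0 := by
  have h := G.add_left 0 0 α z
  rw [add_zero] at h
  exact left_eq_add.mp h

lemma tp_zero_right (x : M) (α : Γ) : G.tp x α 0 = 0 := by
  have h := G.add_right x α 0 0
  rw [add_zero] at h
  exact left_eq_add.mp h

lemma tp_sub_left (x y : M) (α : Γ) (z : M) :
    G.tp (x - y) α z = G.tp x α z - G.tp y α z := by
  have h := G.add_left (x - y) y α z
  rw [sub_add_cancel] at h
  rw [h]; abel

lemma tp_sub_right (x : M) (α : Γ) (y z : M) :
    G.tp x α (y - z) = G.tp x α y - G.tp x α z := by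
  have h := G.add_right x α (y - z) z
  rw [sub_add_cancel] at h
  rw [h]; abel

lemma tp_add_left' (x y : M) (α : Γ) (z : M) :
    G.tp (x + y) α z = G.tp x α z + G.tp y α z := G.add_left x y α z

lemma zero_mem_center : (0 : M) ∈ G.center := by
  intro α y
  rw [G.tp_zero_left, G.tp_zero_right]

lemma sub_mem_center {x y : M} (hx : x ∈ G.center) (hy : y ∈ G.center) :
    x - y ∈ G.center := by
  intro α z
  rw [G.tp_sub_left, G.tp_sub_right, hx α z, hy α z]

lemma comm_tp_right (hA : G.AssumptionA) (t : M) (β : Γ) (y : M) (δ : Γ) (s : M) :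
    G.comm t β (G.tp y δ s) =
      G.tp (G.comm t β y) δ s + G.tp y δ (G.comm t β s) := by
  simp only [comm, G.tp_sub_left, G.tp_sub_right]
  rw [← G.assoc t β y δ s, ← G.assoc y δ t β s, ← G.assoc y δ s β t, hA y t s δ β]
  abel

lemma comm_tp_central (hA : G.AssumptionA) {a : M} (ha : a ∈ G.center)
    (c : M) (α β : Γ) (x : M) :
    G.comm c α (G.tp x β a) = G.tp (G.comm c α x) β a := by
  simp only [comm, G.tp_sub_left]
  rw [G.assoc x β a α c, ha α c, ← G.assoc x β c α a, hA x c a β α,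
    ← G.assoc c α x β a]

lemma comm_tp_self (hA : G.AssumptionA) (c : M) (α δ : Γ) (y : M) :
    G.comm c α (G.tp c δ y) = G.tp c δ (G.comm c α y) := by
  simp only [comm, G.tp_sub_right]
  rw [← G.assoc c α c δ y, ← G.assoc c δ c α y, ← G.assoc c δ y α c, hA c c y δ α]

lemma key1 (hA : G.AssumptionA) {a t : M} {β : Γ} (ha : a ∈ G.center)
    (hz : G.tp t β a ∈ G.center) (y : M) (γ : Γ) :
    G.tp (G.comm t β y) γ a = 0 := by
  have h := hz γ y
  rw [G.assoc t β a γ y, ha γ y, ← G.assoc t β y γ a, ← G.assoc y γ t β a,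
    hA y t a γ β] at h
  simp only [comm, G.tp_sub_left]
  rw [h, sub_self]

lemma central_factor (hA : G.AssumptionA) (hP : G.IsPrime) {a t : M}
    (ha : a ∈ G.center) (h0 : a ≠ 0)
    (hz : ∀ β : Γ, G.tp t β a ∈ G.center) : t ∈ G.center := by
  intro β y
  have key : ∀ (s : M) (δ γ : Γ), G.tp (G.tp (G.comm t β y) δ s) γ a = 0 := by
    intro s δ γ
    have h1 := G.key1 hA ha (hz β) (G.tp y δ s) γ
    rw [G.comm_tp_right hA, G.add_left] at h1
    have h2 : G.tp (G.tp y δ (G.comm t β s)) γ a = 0 := by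
      rw [G.assoc, G.key1 hA ha (hz β) s γ, G.tp_zero_right]
    rw [h2, add_zero] at h1
    exact h1
  rcases hP (G.comm t β y) a key with h | h
  · have : G.tp t β y - G.tp y β t = 0 := h
    exact sub_eq_zero.mp this
  · exact absurd h h0

end GammaRing

theorem stmt_8 {M Γ : Type*} [AddCommGroup M] [AddCommGroup Γ] (G : GammaRing M Γ)
    (hA : G.AssumptionA) (hP : G.IsPrime) (J : AddSubgroup M) (hJ : G.IsLeftIdeal J)
    (f : M → M) (hf : ∀ x y : M, f (x + y) = f x + f y)
    (hcent : G.CentralizingOn f J) :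
    ∀ a ∈ J, a ∈ G.center → f a ∈ G.center := by
  intro a haJ haZ
  by_cases ha0 : a = 0
  · have hf0 : f 0 = 0 := by
      have h := hf 0 0
      rw [add_zero] at h
      exact left_eq_add.mp h
    rw [ha0, hf0]
    exact G.zero_mem_center
  · -- Step A: [f a, b]_α ∈ Z for all b ∈ J
    have hstepA : ∀ b ∈ J, ∀ α : Γ, G.comm (f a) α b ∈ G.center := by
      intro b hb α
      have h1 := hcent (a + b) (J.add_mem haJ hb) α
      have h2 := hcent b hb α
      rw [hf] at h1
      have e : G.comm (f a + f b) α (a + b) =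
          G.comm (f a) α a + G.comm (f a) α b + G.comm (f b) α a +
            G.comm (f b) α b := by
        simp only [GammaRing.comm, G.add_left, G.add_right]
        abel
      have hfaa : G.comm (f a) α a = 0 := by
        simp only [GammaRing.comm]
        rw [← haZ α (f a), sub_self]
      have hfba : G.comm (f b) α a = 0 := by
        simp only [GammaRing.comm]
        rw [haZ α (f b), sub_self]
      rw [e, hfaa, hfba] at h1
      have e2 : G.comm (f a) α b =
          (0 + G.comm (f a) α b + 0 + G.comm (f b) α b) - G.comm (f b) α b := by
        abel
      rw [e2]
      exact G.sub_mem_center h1 h2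
    -- Step B: [f a, x]_α β a ∈ Z for all x, α, β
    have hB : ∀ (x : M) (α β : Γ), G.tp (G.comm (f a) α x) β a ∈ G.center := by
      intro x α β
      have h := hstepA (G.tp x β a) (hJ x β a haJ) α
      rwa [G.comm_tp_central hA haZ] at h
    -- Step C: [f a, x]_α ∈ Z for all x, α
    have hC : ∀ (x : M) (α : Γ), G.comm (f a) α x ∈ G.center := by
      intro x α
      exact G.central_factor hA hP haZ ha0 (fun β => hB x α β)
    -- Conclusion
    intro α y
    by_cases hw : G.comm (f a) α y = 0
    · have : G.tp (f a) α y - G.tp y α (f a) = 0 := hw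
      exact sub_eq_zero.mp this
    · have hcZ : f a ∈ G.center := by
        refine G.central_factor hA hP (hC y α) hw (fun δ => ?_)
        have h := hC (G.tp (f a) δ y) α
        rwa [G.comm_tp_self hA] at h
      exact hcZ α y
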